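/- (Bound on the error of the average predictor-feedback law.) With X⁺, P and U₁ as defined in the context, |U₁ − K·P| ≤ λ(ε, τ) ( |X_t| + ∫_{t−D}^{t} |U(θ)| dθ ), where λ(ε, τ) = ε · e^{(M̄_A + ε) D} · max{ δ₁(τ), δ₂(ε, τ) }, δ₁(τ) = max{1, M̄_B} (M_K (D−τ) + 1), and δ₂(ε, τ) = 2 M_K M̄_B (D−τ) + ε + M_K + M̄_B. -/

import Mathlib

open MeasureTheory

/-- Descending product `∏_{j=a}^{b} C j := C b * C (b-1) * ⋯ * C a`
(the identity if `b < a`). -/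
noncomputable def dprod {α : Type*} [Monoid α] (C : ℕ → α) (a b : ℕ) : α :=
  ((List.range' a (b + 1 - a)).reverse.map C).prod

lemma dprod_nil {α : Type*} [Monoid α] (C : ℕ → α) {a b : ℕ} (h : b + 1 ≤ a) :
    dprod C a b = 1 := by
  unfold dprod
  have : b + 1 - a = 0 := by omega
  simp [this]

lemma dprod_succ {α : Type*} [Monoid α] (C : ℕ → α) {a b : ℕ} (h : a ≤ b + 1) :
    dprod C a (b + 1) = C (b + 1) * dprod C a b := by
  unfold dprod
  have h1 : b + 1 + 1 - a = (b + 1 - a) + 1 := by omega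
  have h2 : a + 1 * (b + 1 - a) = b + 1 := by omega
  rw [h1, List.range'_concat, h2, List.reverse_append]
  simp

lemma dprod_cons {α : Type*} [Monoid α] (C : ℕ → α) {a b : ℕ} (h : a ≤ b) :
    dprod C a b = dprod C (a + 1) b * C a := by
  unfold dprod
  have h1 : b + 1 - a = (b + 1 - (a + 1)) + 1 := by omega
  rw [h1, List.range'_succ, List.reverse_cons]
  simp

lemma dprod_congr {α : Type*} [Monoid α] {C C' : ℕ → α} {a b : ℕ}
    (h : ∀ j, a ≤ j → j ≤ b → C j = C' j) : dprod C a b = dprod C' a b := by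
  unfold dprod
  congr 1
  apply List.map_congr_left
  intro x hx
  rw [List.mem_reverse, List.mem_range'_1] at hx
  exact h x hx.1 (by omega)

section ExpBounds

variable {𝔸 : Type*} [NormedRing 𝔸] [NormedAlgebra ℝ 𝔸] [CompleteSpace 𝔸]

lemma aux_norm_pow_le (hone : ‖(1 : 𝔸)‖ ≤ 1) {x : 𝔸} {M : ℝ} (hx : ‖x‖ ≤ M) :
    ∀ n : ℕ, ‖x ^ n‖ ≤ M ^ n := by
  have h0M : 0 ≤ M := le_trans (norm_nonneg x) hx
  intro n
  induction n with
  | zero => simpa using hone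
  | succ n ih =>
      rw [pow_succ, pow_succ]
      exact le_trans (norm_mul_le _ _) (mul_le_mul ih hx (norm_nonneg x) (pow_nonneg h0M n))

lemma aux_norm_exp_le (hone : ‖(1 : 𝔸)‖ ≤ 1) {x : 𝔸} {M : ℝ} (hx : ‖x‖ ≤ M) :
    ‖NormedSpace.exp x‖ ≤ Real.exp M := by
  rw [NormedSpace.exp_eq_tsum (𝕂 := ℝ)]
  calc ‖∑' n : ℕ, ((n.factorial : ℝ))⁻¹ • x ^ n‖
      ≤ ∑' n : ℕ, ‖((n.factorial : ℝ))⁻¹ • x ^ n‖ :=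
        norm_tsum_le_tsum_norm (NormedSpace.norm_expSeries_summable' x)
    _ ≤ ∑' n : ℕ, M ^ n / n.factorial := by
        apply Summable.tsum_le_tsum _ (NormedSpace.norm_expSeries_summable' x)
          (Real.summable_pow_div_factorial M)
        intro n
        rw [norm_smul, norm_inv, Real.norm_natCast, div_eq_inv_mul]
        gcongr
        exact aux_norm_pow_le hone hx n
    _ = Real.exp M := by
        rw [Real.exp_eq_exp_ℝ, NormedSpace.exp_eq_tsum_div]

lemma aux_norm_pow_sub_pow (hone : ‖(1 : 𝔸)‖ ≤ 1) {x y : 𝔸} {M δ : ℝ}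
    (hx : ‖x‖ ≤ M) (hy : ‖y‖ ≤ M) (hδ : ‖x - y‖ ≤ δ) :
    ∀ n : ℕ, ‖x ^ n - y ^ n‖ ≤ n * M ^ (n - 1) * δ := by
  have h0M : 0 ≤ M := le_trans (norm_nonneg x) hx
  have h0δ : 0 ≤ δ := le_trans (norm_nonneg _) hδ
  intro n
  induction n with
  | zero => simp
  | succ n ih =>
      have key : x ^ (n + 1) - y ^ (n + 1) = x ^ n * (x - y) + (x ^ n - y ^ n) * y := by
        rw [pow_succ, pow_succ]
        noncomm_ring
      rw [key]
      have h1 : ‖x ^ n * (x - y)‖ ≤ M ^ n * δ :=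
        le_trans (norm_mul_le _ _)
          (mul_le_mul (aux_norm_pow_le hone hx n) hδ (norm_nonneg _) (pow_nonneg h0M n))
      have h2 : ‖(x ^ n - y ^ n) * y‖ ≤ (n * M ^ (n - 1) * δ) * M :=
        le_trans (norm_mul_le _ _)
          (mul_le_mul ih hy (norm_nonneg _)
            (by positivity))
      refine le_trans (norm_add_le _ _) (le_trans (add_le_add h1 h2) ?_)
      have hsub : (n : ℝ) * M ^ (n - 1) * δ * M ≤ n * M ^ n * δ := by
        rcases Nat.eq_zero_or_pos n with hn | hn
        · subst hn; simp
        · apply le_of_eq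
          have hMM : M ^ (n - 1) * M = M ^ n := by
            rw [← pow_succ]
            congr 1
            omega
          calc (n : ℝ) * M ^ (n - 1) * δ * M = (n : ℝ) * (M ^ (n - 1) * M) * δ := by ring
            _ = (n : ℝ) * M ^ n * δ := by rw [hMM]
      simp only [Nat.add_sub_cancel]
      push_cast
      linarith

lemma aux_norm_exp_sub_exp (hone : ‖(1 : 𝔸)‖ ≤ 1) {x y : 𝔸} {M δ : ℝ}
    (hx : ‖x‖ ≤ M) (hy : ‖y‖ ≤ M) (hδ : ‖x - y‖ ≤ δ) :
    ‖NormedSpace.exp x - NormedSpace.exp y‖ ≤ δ * Real.exp M := by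
  have h0M : 0 ≤ M := le_trans (norm_nonneg x) hx
  have h0δ : 0 ≤ δ := le_trans (norm_nonneg _) hδ
  -- the comparison sequence
  set c : ℕ → ℝ := fun n => (n : ℝ) * M ^ (n - 1) / n.factorial with hc
  have hcsucc : ∀ n : ℕ, c (n + 1) = M ^ n / n.factorial := by
    intro n
    simp only [hc, Nat.add_sub_cancel, Nat.factorial_succ, Nat.cast_mul, Nat.cast_add,
      Nat.cast_one]
    rw [div_eq_div_iff (by positivity) (by positivity)]
    ring
  have hcsum : Summable c := by
    rw [← summable_nat_add_iff 1]
    simp only [hcsucc]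
    exact Real.summable_pow_div_factorial M
  have htsumc : ∑' n, c n = Real.exp M := by
    calc ∑' n, c n = c 0 + ∑' n, c (n + 1) := hcsum.tsum_eq_zero_add
      _ = ∑' n : ℕ, M ^ n / n.factorial := by
          rw [show c 0 = 0 from by simp [hc], zero_add]
          exact tsum_congr hcsucc
      _ = Real.exp M := by rw [Real.exp_eq_exp_ℝ, NormedSpace.exp_eq_tsum_div]
  have heq : NormedSpace.exp x - NormedSpace.exp y
      = ∑' n : ℕ, ((n.factorial : ℝ))⁻¹ • (x ^ n - y ^ n) := by
    rw [NormedSpace.exp_eq_tsum (𝕂 := ℝ)]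
    simp only [smul_sub]
    exact (Summable.tsum_sub (NormedSpace.expSeries_summable' x)
      (NormedSpace.expSeries_summable' y)).symm
  rw [heq]
  have hbound : ∀ n : ℕ, ‖((n.factorial : ℝ))⁻¹ • (x ^ n - y ^ n)‖ ≤ c n * δ := by
    intro n
    rw [norm_smul, norm_inv, Real.norm_natCast]
    have := aux_norm_pow_sub_pow hone hx hy hδ n
    calc ((n.factorial : ℝ))⁻¹ * ‖x ^ n - y ^ n‖
        ≤ ((n.factorial : ℝ))⁻¹ * ((n : ℝ) * M ^ (n - 1) * δ) := by
          gcongr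
      _ = c n * δ := by
          simp only [hc]
          field_simp
  have hsumb : Summable fun n : ℕ => c n * δ := hcsum.mul_right δ
  calc ‖∑' n : ℕ, ((n.factorial : ℝ))⁻¹ • (x ^ n - y ^ n)‖
      ≤ ∑' n : ℕ, ‖((n.factorial : ℝ))⁻¹ • (x ^ n - y ^ n)‖ := by
        apply norm_tsum_le_tsum_norm
        apply Summable.of_nonneg_of_le (fun n => norm_nonneg _) hbound hsumb
    _ ≤ ∑' n : ℕ, c n * δ := by
        apply Summable.tsum_le_tsum hbound _ hsumb
        apply Summable.of_nonneg_of_le (fun n => norm_nonneg _) hbound hsumb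
    _ = δ * Real.exp M := by rw [tsum_mul_right, htsumc, mul_comm]

end ExpBounds

section Tele

variable {𝔸 : Type*} [NormedRing 𝔸] [NormedAlgebra ℝ 𝔸] [CompleteSpace 𝔸]

lemma aux_exp_smul_norm (hone : ‖(1 : 𝔸)‖ ≤ 1) {𝒜 : 𝔸} {dj M : ℝ}
    (hd : 0 ≤ dj) (h1 : ‖𝒜‖ ≤ M) :
    ‖NormedSpace.exp (dj • 𝒜)‖ ≤ Real.exp (M * dj) := by
  apply aux_norm_exp_le hone
  rw [norm_smul, Real.norm_eq_abs, abs_of_nonneg hd, mul_comm]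
  have h0M : 0 ≤ M := le_trans (norm_nonneg _) h1
  gcongr

lemma aux_exp_smul_sub (hone : ‖(1 : 𝔸)‖ ≤ 1) {𝒜 Ab : 𝔸} {dj M ε : ℝ}
    (hd : 0 ≤ dj) (h1 : ‖𝒜‖ ≤ M) (h2 : ‖Ab‖ ≤ M) (h3 : ‖𝒜 - Ab‖ ≤ ε) :
    ‖NormedSpace.exp (dj • 𝒜) - NormedSpace.exp (dj • Ab)‖ ≤ ε * dj * Real.exp (M * dj) := by
  have h0M : 0 ≤ M := le_trans (norm_nonneg _) h1
  have h0ε : 0 ≤ ε := le_trans (norm_nonneg _) h3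
  have := aux_norm_exp_sub_exp (x := dj • 𝒜) (y := dj • Ab) (M := M * dj) (δ := ε * dj) hone
    (by rw [norm_smul, Real.norm_eq_abs, abs_of_nonneg hd, mul_comm]; gcongr)
    (by rw [norm_smul, Real.norm_eq_abs, abs_of_nonneg hd, mul_comm]; gcongr)
    (by rw [← smul_sub, norm_smul, Real.norm_eq_abs, abs_of_nonneg hd, mul_comm]; gcongr)
  exact this

lemma aux_dprod_norm (hone : ‖(1 : 𝔸)‖ ≤ 1) (𝒜 : ℕ → 𝔸) (d : ℕ → ℝ) {M : ℝ} (hM : 0 ≤ M)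
    (a b : ℕ) (hd : ∀ j, a ≤ j → j ≤ b → 0 ≤ d j) (h𝒜 : ∀ j, a ≤ j → j ≤ b → ‖𝒜 j‖ ≤ M) :
    ‖dprod (fun j => NormedSpace.exp (d j • 𝒜 j)) a b‖ ≤
      Real.exp (M * ∑ j ∈ Finset.Icc a b, d j) := by
  induction b with
  | zero =>
      rcases Nat.eq_zero_or_pos a with ha | ha
      · subst ha
        rw [show dprod (fun j => NormedSpace.exp (d j • 𝒜 j)) 0 0
            = NormedSpace.exp (d 0 • 𝒜 0) from by unfold dprod; simp]
        simpa using aux_exp_smul_norm hone (hd 0 le_rfl le_rfl) (h𝒜 0 le_rfl le_rfl)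
      · rw [dprod_nil _ (by omega), Finset.Icc_eq_empty (by omega)]
        simpa using hone
  | succ b ih =>
      rcases le_or_gt a (b + 1) with ha | ha
      · rw [dprod_succ _ ha, Finset.sum_Icc_succ_top ha]
        rcases eq_or_lt_of_le ha with rfl | ha'
        · rw [dprod_nil _ (by omega), mul_one, Finset.Icc_eq_empty (by omega)]
          simp only [Finset.sum_empty, zero_add]
          exact aux_exp_smul_norm hone (hd _ le_rfl le_rfl) (h𝒜 _ le_rfl le_rfl)
        · have hab : a ≤ b := by omega
          have ih' := ih (fun j hj hj' => hd j hj (by omega)) (fun j hj hj' => h𝒜 j hj (by omega))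
          calc ‖NormedSpace.exp (d (b+1) • 𝒜 (b+1)) * dprod (fun j => NormedSpace.exp (d j • 𝒜 j)) a b‖
              ≤ ‖NormedSpace.exp (d (b+1) • 𝒜 (b+1))‖ * ‖dprod (fun j => NormedSpace.exp (d j • 𝒜 j)) a b‖ :=
                norm_mul_le _ _
            _ ≤ Real.exp (M * d (b+1)) * Real.exp (M * ∑ j ∈ Finset.Icc a b, d j) := by
                apply mul_le_mul (aux_exp_smul_norm hone (hd _ (by omega) le_rfl) (h𝒜 _ (by omega) le_rfl))
                  ih' (norm_nonneg _) (Real.exp_nonneg _)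
            _ = Real.exp (M * (∑ j ∈ Finset.Icc a b, d j + d (b+1))) := by
                rw [← Real.exp_add]; ring_nf
      · rw [dprod_nil _ (by omega), Finset.Icc_eq_empty (by omega)]
        simpa using hone

lemma aux_dprod_sub (hone : ‖(1 : 𝔸)‖ ≤ 1) (𝒜 : ℕ → 𝔸) (Ab : 𝔸) (d : ℕ → ℝ) {M ε : ℝ}
    (hAb : ‖Ab‖ ≤ M) (hε : 0 ≤ ε)
    (a b : ℕ) (hd : ∀ j, a ≤ j → j ≤ b → 0 ≤ d j) (h𝒜 : ∀ j, a ≤ j → j ≤ b → ‖𝒜 j‖ ≤ M)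
    (h𝒜d : ∀ j, a ≤ j → j ≤ b → ‖𝒜 j - Ab‖ ≤ ε) :
    ‖dprod (fun j => NormedSpace.exp (d j • 𝒜 j)) a b
        - NormedSpace.exp ((∑ j ∈ Finset.Icc a b, d j) • Ab)‖ ≤
      ε * (∑ j ∈ Finset.Icc a b, d j) * Real.exp (M * ∑ j ∈ Finset.Icc a b, d j) := by
  have hM : 0 ≤ M := le_trans (norm_nonneg _) hAb
  induction b with
  | zero =>
      rcases Nat.eq_zero_or_pos a with ha | ha
      · subst ha
        rw [show dprod (fun j => NormedSpace.exp (d j • 𝒜 j)) 0 0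
            = NormedSpace.exp (d 0 • 𝒜 0) from by unfold dprod; simp]
        simpa using aux_exp_smul_sub hone (hd 0 le_rfl le_rfl) (h𝒜 0 le_rfl le_rfl) hAb
          (h𝒜d 0 le_rfl le_rfl)
      · rw [dprod_nil _ (by omega), Finset.Icc_eq_empty (by omega)]
        simp [NormedSpace.exp_zero]
  | succ b ih =>
      rcases le_or_gt a (b + 1) with ha | ha
      · rw [dprod_succ _ ha, Finset.sum_Icc_succ_top ha]
        rcases eq_or_lt_of_le ha with rfl | ha'
        · rw [dprod_nil _ (by omega), mul_one, Finset.Icc_eq_empty (by omega)]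
          simp only [Finset.sum_empty, zero_add]
          exact aux_exp_smul_sub hone (hd _ le_rfl le_rfl) (h𝒜 _ le_rfl le_rfl) hAb
            (h𝒜d _ le_rfl le_rfl)
        · have hab : a ≤ b := by omega
          have ih' := ih (fun j hj hj' => hd j hj (by omega)) (fun j hj hj' => h𝒜 j hj (by omega))
            (fun j hj hj' => h𝒜d j hj (by omega))
          set S := ∑ j ∈ Finset.Icc a b, d j with hS
          have hS0 : 0 ≤ S := Finset.sum_nonneg fun j hj => by
            rw [Finset.mem_Icc] at hj; exact hd j hj.1 (by omega)
          have hd1 : 0 ≤ d (b+1) := hd _ (by omega) le_rfl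
          set Eb := NormedSpace.exp (d (b+1) • 𝒜 (b+1)) with hEb
          set Pb := dprod (fun j => NormedSpace.exp (d j • 𝒜 j)) a b with hPb
          have hsplit : NormedSpace.exp ((S + d (b+1)) • Ab)
              = NormedSpace.exp (d (b+1) • Ab) * NormedSpace.exp (S • Ab) := by
            rw [add_smul, add_comm]
            letI : NormedAlgebra ℚ 𝔸 := NormedAlgebra.restrictScalars ℚ ℝ 𝔸
            exact NormedSpace.exp_add_of_commute (((Commute.refl Ab).smul_left _).smul_right _)
          have hkey : Eb * Pb - NormedSpace.exp ((S + d (b+1)) • Ab)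
              = Eb * (Pb - NormedSpace.exp (S • Ab))
                + (Eb - NormedSpace.exp (d (b+1) • Ab)) * NormedSpace.exp (S • Ab) := by
            rw [hsplit]; noncomm_ring
          rw [hkey]
          have hEbn : ‖Eb‖ ≤ Real.exp (M * d (b+1)) :=
            aux_exp_smul_norm hone hd1 (h𝒜 _ (by omega) le_rfl)
          have hEbd : ‖Eb - NormedSpace.exp (d (b+1) • Ab)‖ ≤ ε * d (b+1) * Real.exp (M * d (b+1)) :=
            aux_exp_smul_sub hone hd1 (h𝒜 _ (by omega) le_rfl) hAb (h𝒜d _ (by omega) le_rfl)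
          have hESn : ‖NormedSpace.exp (S • Ab)‖ ≤ Real.exp (M * S) := aux_exp_smul_norm hone hS0 hAb
          calc ‖Eb * (Pb - NormedSpace.exp (S • Ab))
                + (Eb - NormedSpace.exp (d (b+1) • Ab)) * NormedSpace.exp (S • Ab)‖
              ≤ ‖Eb‖ * ‖Pb - NormedSpace.exp (S • Ab)‖
                + ‖Eb - NormedSpace.exp (d (b+1) • Ab)‖ * ‖NormedSpace.exp (S • Ab)‖ :=
                le_trans (norm_add_le _ _) (add_le_add (norm_mul_le _ _) (norm_mul_le _ _))
            _ ≤ Real.exp (M * d (b+1)) * (ε * S * Real.exp (M * S))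
                + (ε * d (b+1) * Real.exp (M * d (b+1))) * Real.exp (M * S) := by
                apply add_le_add
                · exact mul_le_mul hEbn ih' (norm_nonneg _) (Real.exp_nonneg _)
                · exact mul_le_mul hEbd hESn (norm_nonneg _) (by positivity)
            _ = ε * (S + d (b+1)) * Real.exp (M * (S + d (b+1))) := by
                rw [mul_add M S, Real.exp_add]; ring
      · rw [dprod_nil _ (by omega), Finset.Icc_eq_empty (by omega)]
        simp [NormedSpace.exp_zero]

end Tele

section SumLemmas

lemma aux_sum_shift {M : Type*} [AddCommMonoid M] (f : ℕ → M) (n : ℕ) :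
    ∑ j ∈ Finset.Icc 1 n, f j = ∑ k ∈ Finset.range n, f (k + 1) := by
  induction n with
  | zero => simp
  | succ n ih => rw [Finset.sum_Icc_succ_top (by omega), ih, Finset.sum_range_succ]

lemma aux_tele_sum (g : ℕ → ℝ) (m n : ℕ) (h : m ≤ n + 1) :
    ∑ j ∈ Finset.Icc m n, (g (j + 1) - g j) = g (n + 1) - g m := by
  induction n with
  | zero =>
      interval_cases m
      · simp
      · rw [Finset.Icc_eq_empty (by omega)]; simp
  | succ n ih =>
      rcases eq_or_lt_of_le h with rfl | h'
      · rw [Finset.Icc_eq_empty (by omega)]; simp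
      · rw [Finset.sum_Icc_succ_top (by omega), ih (by omega)]; ring

lemma aux_tele_sum₁ (g : ℕ → ℝ) (n : ℕ) :
    ∑ j ∈ Finset.Icc 1 n, (g j - g (j - 1)) = g n - g 0 := by
  rw [aux_sum_shift]
  simp only [Nat.add_sub_cancel]
  exact Finset.sum_range_sub g n

end SumLemmas


set_option maxHeartbeats 10000000 in
/-- **Bound on the error of the average predictor-feedback law.**
With the short-horizon prediction `X⁺`, the exact predictor `P` and the average-predictor
control value `U₁` as in the context, `|U₁ − K·P| ≤ λ(ε, τ)(|X_t| + ∫_{t−D}^{t} |U(θ)| dθ)`,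
where `λ(ε, τ) = ε e^{(M̄_A + ε) D} max{δ₁(τ), δ₂(ε, τ)}`,
`δ₁(τ) = max{1, M̄_B}(M_K (D−τ) + 1)`, and
`δ₂(ε, τ) = 2 M_K M̄_B (D−τ) + ε + M_K + M̄_B`. -/
theorem stmt7 (q r : ℕ) (D t τ ε MAbar MBbar MK : ℝ) (hD : 0 < D)
    (hτ : τ ∈ Set.Icc 0 D) (s : ℕ → ℝ)
    (hs0 : s 0 = 0) (hmono : ∀ k, k ≤ r → s k ≤ s (k + 1)) (hsend : s (r + 1) = D - τ)
    (A : ℕ → (EuclideanSpace ℝ (Fin q) →L[ℝ] EuclideanSpace ℝ (Fin q)))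
    (Bv : ℕ → EuclideanSpace ℝ (Fin q))
    (K : EuclideanSpace ℝ (Fin q) →L[ℝ] ℝ)
    (Abar : EuclideanSpace ℝ (Fin q) →L[ℝ] EuclideanSpace ℝ (Fin q))
    (Bbar : EuclideanSpace ℝ (Fin q))
    (Kbar : EuclideanSpace ℝ (Fin q) →L[ℝ] ℝ)
    (hAd : ∀ n, 1 ≤ n → n ≤ r + 1 → ‖A n - Abar‖ ≤ ε)
    (hBd : ∀ n, 1 ≤ n → n ≤ r + 1 → ‖Bv n - Bbar‖ ≤ ε)
    (hKd : ‖K - Kbar‖ ≤ ε)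
    (hK : ‖K‖ ≤ MK)
    (hAbar : ‖Abar‖ ≤ MAbar) (hA : ∀ n, 1 ≤ n → n ≤ r + 1 → ‖A n‖ ≤ MAbar)
    (hBbar : ‖Bbar‖ ≤ MBbar) (hB : ∀ n, 1 ≤ n → n ≤ r + 1 → ‖Bv n‖ ≤ MBbar)
    (Xt : EuclideanSpace ℝ (Fin q)) (U : ℝ → ℝ)
    (hUint : IntegrableOn U (Set.Icc (t - D) t))
    (Xp : EuclideanSpace ℝ (Fin q))
    (hXp : Xp = (NormedSpace.exp (τ • A 1)) Xt +
      ∫ θ in (t - D)..(t + τ - D),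
        (NormedSpace.exp ((t + τ - D - θ) • A 1)) (U θ • Bv 1))
    (P : EuclideanSpace ℝ (Fin q))
    (hP : P = (dprod (fun n => NormedSpace.exp ((s n - s (n - 1)) • A n)) 1 (r + 1)) Xp +
      ∑ n ∈ Finset.Icc 1 (r + 1),
        (dprod (fun j => NormedSpace.exp ((s (j + 1) - s j) • A (j + 1))) n r)
          (∫ θ in (t + τ - D + s (n - 1))..(t + τ - D + s n),
            (NormedSpace.exp ((t + τ - D + s n - θ) • A n)) (U θ • Bv n)))
    (U₁ : ℝ)
    (hU₁ : U₁ = Kbar ((NormedSpace.exp ((D - τ) • Abar)) Xp +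
      ∫ θ in (t + τ - D)..t, (NormedSpace.exp ((t - θ) • Abar)) (U θ • Bbar))) :
    |U₁ - K P| ≤
      ε * Real.exp ((MAbar + ε) * D) *
          max (max 1 MBbar * (MK * (D - τ) + 1))
            (2 * MK * MBbar * (D - τ) + ε + MK + MBbar) *
        (‖Xt‖ + ∫ θ in (t - D)..t, |U θ|) := by
  obtain ⟨hτ0, hτD⟩ := hτ
  have hone : ‖(1 : EuclideanSpace ℝ (Fin q) →L[ℝ] EuclideanSpace ℝ (Fin q))‖ ≤ 1 := by
    rw [ContinuousLinearMap.one_def]; exact ContinuousLinearMap.norm_id_le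
  have hε0 : 0 ≤ ε := le_trans (norm_nonneg _) hKd
  have hMA0 : 0 ≤ MAbar := le_trans (norm_nonneg _) hAbar
  have hMB0 : 0 ≤ MBbar := le_trans (norm_nonneg _) hBbar
  have hMK0 : 0 ≤ MK := le_trans (norm_nonneg _) hK
  have hL0 : 0 ≤ D - τ := by linarith
  have hmono2 : ∀ k l, k ≤ l → l ≤ r + 1 → s k ≤ s l := by
    intro k l hkl hl
    induction l with
    | zero => exact le_of_eq (by rw [Nat.le_zero.mp hkl])
    | succ l ih =>
        rcases eq_or_lt_of_le hkl with rfl | h'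
        · exact le_rfl
        · exact le_trans (ih (by omega) (by omega)) (hmono l (by omega))
  have hs_nonneg : ∀ k, k ≤ r + 1 → 0 ≤ s k := by
    intro k hk; rw [← hs0]; exact hmono2 0 k (by omega) hk
  have hs_le : ∀ k, k ≤ r + 1 → s k ≤ D - τ := by
    intro k hk; rw [← hsend]; exact hmono2 k (r + 1) hk le_rfl
  set σ := t + τ - D with hσdef
  have hσ1 : t - D ≤ σ := by rw [hσdef]; linarith
  have hσ2 : σ ≤ t := by rw [hσdef]; linarith
  have hσt : σ + (D - τ) = t := by rw [hσdef]; ring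
  -- rewrite integrands into `U θ • g θ` form
  simp only [_root_.map_smul] at hXp hP hU₁
  -- telescoping sum
  have hsum1 : ∑ j ∈ Finset.Icc 1 (r + 1), (s j - s (j - 1)) = D - τ := by
    rw [aux_tele_sum₁ s (r + 1), hs0, hsend]; ring
  -- continuity helper
  have hcont : ∀ (c : ℝ) (Aop : EuclideanSpace ℝ (Fin q) →L[ℝ] EuclideanSpace ℝ (Fin q))
      (v : EuclideanSpace ℝ (Fin q)),
      Continuous fun θ : ℝ => (NormedSpace.exp ((c - θ) • Aop)) v := by
    intro c Aop v
    letI : NormedAlgebra ℚ (EuclideanSpace ℝ (Fin q) →L[ℝ] EuclideanSpace ℝ (Fin q)) :=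
      NormedAlgebra.restrictScalars ℚ ℝ _
    exact (NormedSpace.exp_continuous.comp
      ((continuous_const.sub continuous_id).smul continuous_const)).clm_apply continuous_const
  -- integrability helper
  have hint : ∀ (g : ℝ → EuclideanSpace ℝ (Fin q)), Continuous g → ∀ a b : ℝ,
      t - D ≤ a → a ≤ b → b ≤ t → IntervalIntegrable (fun θ => U θ • g θ) volume a b := by
    intro g hg a b h1 h2 h3
    rw [intervalIntegrable_iff_integrableOn_Icc_of_le h2]
    have hUsub : IntegrableOn U (Set.Icc a b) := hUint.mono_set (Set.Icc_subset_Icc h1 h3)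
    obtain ⟨C, hC⟩ := isCompact_Icc.exists_bound_of_continuousOn hg.continuousOn
    apply Integrable.mono' (g := fun θ => C * ‖U θ‖) (hUsub.norm.const_mul C)
      (hUsub.aestronglyMeasurable.smul hg.aestronglyMeasurable)
    filter_upwards [ae_restrict_mem measurableSet_Icc] with θ hθ
    rw [Pi.smul_apply', norm_smul]
    calc ‖U θ‖ * ‖g θ‖ ≤ ‖U θ‖ * C := by
          exact mul_le_mul_of_nonneg_left (hC θ hθ) (norm_nonneg _)
      _ = C * ‖U θ‖ := mul_comm _ _
  have habsint : ∀ a b : ℝ, t - D ≤ a → a ≤ b → b ≤ t →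
      IntervalIntegrable (fun θ => |U θ|) volume a b := by
    intro a b h1 h2 h3
    rw [intervalIntegrable_iff_integrableOn_Icc_of_le h2]
    have hUsub : IntegrableOn U (Set.Icc a b) := hUint.mono_set (Set.Icc_subset_Icc h1 h3)
    exact hUsub.norm
  -- norm-of-integral helper
  have hbnd : ∀ (g : ℝ → EuclideanSpace ℝ (Fin q)) (C : ℝ) (a b : ℝ),
      t - D ≤ a → a ≤ b → b ≤ t → (∀ θ ∈ Set.Icc a b, ‖g θ‖ ≤ C) → Continuous g →
      ‖∫ θ in a..b, U θ • g θ‖ ≤ C * ∫ θ in a..b, |U θ| := by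
    intro g C a b h1 h2 h3 hgC hg
    have hC0 : 0 ≤ C := le_trans (norm_nonneg (g a)) (hgC a ⟨le_rfl, h2⟩)
    have hUi : IntervalIntegrable (fun θ => C * |U θ|) volume a b :=
      (habsint a b h1 h2 h3).const_mul C
    have hae : ∀ᵐ θ ∂(volume.restrict (Set.uIoc a b)), ‖U θ • g θ‖ ≤ C * |U θ| := by
      filter_upwards [ae_restrict_mem measurableSet_uIoc] with θ hθ
      have hθ' : θ ∈ Set.Icc a b := by
        rw [Set.uIoc_of_le h2] at hθ; exact Set.Ioc_subset_Icc_self hθ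
      rw [norm_smul, Real.norm_eq_abs]
      calc |U θ| * ‖g θ‖ ≤ |U θ| * C :=
            mul_le_mul_of_nonneg_left (hgC θ hθ') (abs_nonneg _)
        _ = C * |U θ| := mul_comm _ _
    have := intervalIntegral.norm_integral_le_abs_of_norm_le hae hUi
    have hInn : 0 ≤ ∫ θ in a..b, |U θ| :=
      intervalIntegral.integral_nonneg h2 (fun u _ => abs_nonneg _)
    rwa [intervalIntegral.integral_const_mul, abs_of_nonneg (by positivity)] at this
  -- key abbreviations
  set I₁ := ∫ θ in (t - D)..σ, |U θ| with hI₁def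
  set I₂ := ∫ θ in σ..t, |U θ| with hI₂def
  have hI₁0 : 0 ≤ I₁ := intervalIntegral.integral_nonneg hσ1 (fun u _ => abs_nonneg _)
  have hI₂0 : 0 ≤ I₂ := intervalIntegral.integral_nonneg hσ2 (fun u _ => abs_nonneg _)
  have hItot : (∫ θ in (t - D)..t, |U θ|) = I₁ + I₂ :=
    (intervalIntegral.integral_add_adjacent_intervals
      (habsint (t - D) σ le_rfl hσ1 hσ2) (habsint σ t hσ1 hσ2 le_rfl)).symm
  -- Φ bounds
  have hd1 : ∀ j, 1 ≤ j → j ≤ r + 1 → 0 ≤ s j - s (j - 1) := by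
    intro j hj1 hj2
    have := hmono (j - 1) (by omega)
    rw [show j - 1 + 1 = j by omega] at this
    linarith
  have hΦsub : ‖dprod (fun n => NormedSpace.exp ((s n - s (n - 1)) • A n)) 1 (r + 1) -
      NormedSpace.exp ((D - τ) • Abar)‖ ≤ ε * (D - τ) * Real.exp (MAbar * (D - τ)) := by
    have h := aux_dprod_sub hone A Abar (fun n => s n - s (n - 1)) hAbar hε0 1 (r + 1)
      hd1 hA hAd
    beta_reduce at h
    rwa [hsum1] at h
  -- kernel operator bounds
  have hker : ∀ n, 1 ≤ n → n ≤ r + 1 → ∀ θ, σ + s (n - 1) ≤ θ → θ ≤ σ + s n →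
      ‖dprod (fun j => NormedSpace.exp ((s (j + 1) - s j) • A (j + 1))) n r *
          NormedSpace.exp ((σ + s n - θ) • A n) -
        NormedSpace.exp ((t - θ) • Abar)‖ ≤ ε * (D - τ) * Real.exp (MAbar * (D - τ)) ∧
      ‖dprod (fun j => NormedSpace.exp ((s (j + 1) - s j) • A (j + 1))) n r *
          NormedSpace.exp ((σ + s n - θ) • A n)‖ ≤ Real.exp (MAbar * (D - τ)) := by
    intro n hn1 hn2 θ hθ1 hθ2
    have hsn1 : 0 ≤ s (n - 1) := hs_nonneg (n - 1) (by omega)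
    have hsn2 : s n ≤ D - τ := hs_le n hn2
    have hθl : σ ≤ θ := by linarith
    have hθu : θ ≤ t := by linarith
    have htθ1 : t - θ ≤ D - τ := by linarith
    have htθ0 : 0 ≤ t - θ := by linarith
    set d2 : ℕ → ℝ := fun j => if j < n then σ + s n - θ else s (j + 1) - s j with hd2
    set A2 : ℕ → (EuclideanSpace ℝ (Fin q) →L[ℝ] EuclideanSpace ℝ (Fin q)) :=
      fun j => if j < n then A n else A (j + 1) with hA2def
    have hprodeq : dprod (fun j => NormedSpace.exp (d2 j • A2 j)) (n - 1) r
        = dprod (fun j => NormedSpace.exp ((s (j + 1) - s j) • A (j + 1))) n r *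
          NormedSpace.exp ((σ + s n - θ) • A n) := by
      rw [dprod_cons _ (show n - 1 ≤ r by omega)]
      congr 1
      · rw [show n - 1 + 1 = n by omega]
        apply dprod_congr
        intro j hj hj'
        simp only [hd2, hA2def]
        rw [if_neg (by omega), if_neg (by omega)]
      · simp only [hd2, hA2def]
        rw [if_pos (by omega), if_pos (by omega)]
    have hsum2 : ∑ j ∈ Finset.Icc (n - 1) r, d2 j = t - θ := by
      have hins : Finset.Icc (n - 1) r = insert (n - 1) (Finset.Icc n r) := by
        ext x; simp only [Finset.mem_Icc, Finset.mem_insert]; omega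
      rw [hins, Finset.sum_insert (by simp only [Finset.mem_Icc]; omega)]
      have h1 : ∑ j ∈ Finset.Icc n r, d2 j = ∑ j ∈ Finset.Icc n r, (s (j + 1) - s j) := by
        apply Finset.sum_congr rfl
        intro j hj; rw [Finset.mem_Icc] at hj
        simp only [hd2]; rw [if_neg (by omega)]
      rw [h1, aux_tele_sum s n r (by omega), hsend]
      simp only [hd2]; rw [if_pos (by omega)]
      linarith
    have hd2n : ∀ j, n - 1 ≤ j → j ≤ r → 0 ≤ d2 j := by
      intro j hj hj'
      simp only [hd2]
      split
      · linarith
      · have := hmono j (by omega); linarith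
    have hA2n : ∀ j, n - 1 ≤ j → j ≤ r → ‖A2 j‖ ≤ MAbar := by
      intro j hj hj'
      simp only [hA2def]
      split
      · exact hA n hn1 hn2
      · exact hA (j + 1) (by omega) (by omega)
    have hA2d : ∀ j, n - 1 ≤ j → j ≤ r → ‖A2 j - Abar‖ ≤ ε := by
      intro j hj hj'
      simp only [hA2def]
      split
      · exact hAd n hn1 hn2
      · exact hAd (j + 1) (by omega) (by omega)
    constructor
    · have h := aux_dprod_sub hone A2 Abar d2 hAbar hε0 (n - 1) r hd2n hA2n hA2d
      rw [hsum2, hprodeq] at h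
      refine le_trans h ?_
      have he : Real.exp (MAbar * (t - θ)) ≤ Real.exp (MAbar * (D - τ)) :=
        Real.exp_le_exp.mpr (by nlinarith)
      calc ε * (t - θ) * Real.exp (MAbar * (t - θ))
          ≤ ε * (D - τ) * Real.exp (MAbar * (t - θ)) := by
            apply mul_le_mul_of_nonneg_right _ (Real.exp_nonneg _)
            exact mul_le_mul_of_nonneg_left htθ1 hε0
        _ ≤ ε * (D - τ) * Real.exp (MAbar * (D - τ)) := by
            apply mul_le_mul_of_nonneg_left he (by positivity)
    · have h := aux_dprod_norm hone A2 d2 hMA0 (n - 1) r hd2n hA2n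
      rw [hsum2, hprodeq] at h
      exact le_trans h (Real.exp_le_exp.mpr (by nlinarith))
  -- names
  set Φap := dprod (fun n => NormedSpace.exp ((s n - s (n - 1)) • A n)) 1 (r + 1) with hΦdef
  set Ibar := ∫ θ in σ..t, U θ • (NormedSpace.exp ((t - θ) • Abar)) Bbar with hIbardef
  set S := ∑ n ∈ Finset.Icc 1 (r + 1),
      (dprod (fun j => NormedSpace.exp ((s (j + 1) - s j) • A (j + 1))) n r)
        (∫ θ in (σ + s (n - 1))..(σ + s n),
          U θ • (NormedSpace.exp ((σ + s n - θ) • A n)) (Bv n)) with hSdef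
  set Zb := (NormedSpace.exp ((D - τ) • Abar)) Xp + Ibar with hZbdef
  -- interval endpoints facts
  have hak : ∀ k, k ≤ r + 1 → t - D ≤ σ + s k ∧ σ + s k ≤ t := by
    intro k hk
    have h1 := hs_nonneg k hk
    have h2 := hs_le k hk
    constructor <;> [linarith; linarith]
  have haki : ∀ k, k ≤ r → σ + s k ≤ σ + s (k + 1) := by
    intro k hk; have := hmono k hk; linarith
  -- bound on Xp
  have hXpn : ‖Xp‖ ≤ Real.exp (MAbar * τ) * max 1 MBbar * (‖Xt‖ + I₁) := by
    rw [hXp]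
    refine le_trans (norm_add_le _ _) ?_
    have h1 : ‖(NormedSpace.exp (τ • A 1)) Xt‖ ≤ Real.exp (MAbar * τ) * ‖Xt‖ :=
      le_trans (ContinuousLinearMap.le_opNorm _ _)
        (mul_le_mul_of_nonneg_right (aux_exp_smul_norm hone hτ0 (hA 1 le_rfl (by omega)))
          (norm_nonneg _))
    have h2 : ‖∫ θ in (t - D)..σ, U θ • (NormedSpace.exp ((σ - θ) • A 1)) (Bv 1)‖ ≤
        (Real.exp (MAbar * τ) * MBbar) * I₁ := by
      apply hbnd _ _ _ _ le_rfl hσ1 hσ2 _ (hcont σ (A 1) (Bv 1))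
      intro θ hθ
      calc ‖(NormedSpace.exp ((σ - θ) • A 1)) (Bv 1)‖
          ≤ ‖NormedSpace.exp ((σ - θ) • A 1)‖ * ‖Bv 1‖ := ContinuousLinearMap.le_opNorm _ _
        _ ≤ Real.exp (MAbar * (σ - θ)) * MBbar := by
            apply mul_le_mul (aux_exp_smul_norm hone (by obtain ⟨c1, c2⟩ := hθ; linarith)
              (hA 1 le_rfl (by omega))) (hB 1 le_rfl (by omega)) (norm_nonneg _)
              (Real.exp_nonneg _)
        _ ≤ Real.exp (MAbar * τ) * MBbar := by
            apply mul_le_mul_of_nonneg_right _ hMB0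
            apply Real.exp_le_exp.mpr
            obtain ⟨c1, c2⟩ := hθ
            nlinarith
    refine le_trans (add_le_add h1 h2) ?_
    have hm1 : (1 : ℝ) ≤ max 1 MBbar := le_max_left _ _
    have hm2 : MBbar ≤ max 1 MBbar := le_max_right _ _
    have he : (0 : ℝ) < Real.exp (MAbar * τ) := Real.exp_pos _
    have ha1 : Real.exp (MAbar * τ) * 1 * ‖Xt‖ ≤ Real.exp (MAbar * τ) * max 1 MBbar * ‖Xt‖ :=
      mul_le_mul_of_nonneg_right (mul_le_mul_of_nonneg_left hm1 he.le) (norm_nonneg Xt)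
    have ha2 : Real.exp (MAbar * τ) * MBbar * I₁ ≤ Real.exp (MAbar * τ) * max 1 MBbar * I₁ :=
      mul_le_mul_of_nonneg_right (mul_le_mul_of_nonneg_left hm2 he.le) hI₁0
    nlinarith
  -- bound on Zb
  have hZbn : ‖Zb‖ ≤ Real.exp (MAbar * (D - τ)) * ‖Xp‖ +
      Real.exp (MAbar * (D - τ)) * MBbar * I₂ := by
    rw [hZbdef]
    refine le_trans (norm_add_le _ _) (add_le_add ?_ ?_)
    · exact le_trans (ContinuousLinearMap.le_opNorm _ _)
        (mul_le_mul_of_nonneg_right (aux_exp_smul_norm hone hL0 hAbar) (norm_nonneg _))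
    · rw [hIbardef]
      apply hbnd _ _ _ _ hσ1 hσ2 le_rfl _ (hcont t Abar Bbar)
      intro θ hθ
      calc ‖(NormedSpace.exp ((t - θ) • Abar)) Bbar‖
          ≤ ‖NormedSpace.exp ((t - θ) • Abar)‖ * ‖Bbar‖ := ContinuousLinearMap.le_opNorm _ _
        _ ≤ Real.exp (MAbar * (t - θ)) * MBbar := by
            apply mul_le_mul (aux_exp_smul_norm hone (by obtain ⟨c1, c2⟩ := hθ; linarith)
              hAbar) hBbar (norm_nonneg _) (Real.exp_nonneg _)
        _ ≤ Real.exp (MAbar * (D - τ)) * MBbar := by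
            apply mul_le_mul_of_nonneg_right _ hMB0
            apply Real.exp_le_exp.mpr
            obtain ⟨c1, c2⟩ := hθ
            nlinarith
  -- reindex S
  have hreidx : S = ∑ k ∈ Finset.range (r + 1),
      (dprod (fun j => NormedSpace.exp ((s (j + 1) - s j) • A (j + 1))) (k + 1) r)
        (∫ θ in (σ + s k)..(σ + s (k + 1)),
          U θ • (NormedSpace.exp ((σ + s (k + 1) - θ) • A (k + 1))) (Bv (k + 1))) := by
    rw [hSdef, aux_sum_shift]
    simp only [Nat.add_sub_cancel]
  -- integrability of pieces
  have hJint : ∀ k, k ≤ r → IntervalIntegrable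
      (fun θ => U θ • (NormedSpace.exp ((t - θ) • Abar)) Bbar) volume
      (σ + s k) (σ + s (k + 1)) := by
    intro k hk
    exact hint _ (hcont t Abar Bbar) _ _ (hak k (by omega)).1 (haki k hk)
      (hak (k + 1) (by omega)).2
  have hGint : ∀ k, k ≤ r → IntervalIntegrable
      (fun θ => U θ • (NormedSpace.exp ((σ + s (k + 1) - θ) • A (k + 1))) (Bv (k + 1)))
      volume (σ + s k) (σ + s (k + 1)) := by
    intro k hk
    exact hint _ (hcont (σ + s (k + 1)) (A (k + 1)) (Bv (k + 1))) _ _ (hak k (by omega)).1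
      (haki k hk) (hak (k + 1) (by omega)).2
  -- splitting Ibar
  have hIbarsplit : Ibar = ∑ k ∈ Finset.range (r + 1),
      ∫ θ in (σ + s k)..(σ + s (k + 1)),
        U θ • (NormedSpace.exp ((t - θ) • Abar)) Bbar := by
    have h := intervalIntegral.sum_integral_adjacent_intervals
      (f := fun θ => U θ • (NormedSpace.exp ((t - θ) • Abar)) Bbar)
      (a := fun k => σ + s k) (n := r + 1) (μ := volume) (fun k hk => hJint k (by omega))
    beta_reduce at h
    rw [show σ + s 0 = σ by rw [hs0]; ring, show σ + s (r + 1) = t by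
      rw [hsend, hσdef]; ring] at h
    rw [hIbardef, ← h]
  have habssplit : I₂ = ∑ k ∈ Finset.range (r + 1),
      ∫ θ in (σ + s k)..(σ + s (k + 1)), |U θ| := by
    have h := intervalIntegral.sum_integral_adjacent_intervals
      (f := fun θ => |U θ|) (a := fun k => σ + s k) (n := r + 1) (μ := volume)
      (fun k hk => habsint _ _ (hak k (by omega)).1 (haki k (by omega))
        (hak (k + 1) (by omega)).2)
    beta_reduce at h
    rw [show σ + s 0 = σ by rw [hs0]; ring, show σ + s (r + 1) = t by
      rw [hsend, hσdef]; ring] at h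
    rw [hI₂def, ← h]
  -- per-term bound
  have hterm : ∀ k ∈ Finset.range (r + 1),
      ‖(∫ θ in (σ + s k)..(σ + s (k + 1)), U θ • (NormedSpace.exp ((t - θ) • Abar)) Bbar) -
        (dprod (fun j => NormedSpace.exp ((s (j + 1) - s j) • A (j + 1))) (k + 1) r)
          (∫ θ in (σ + s k)..(σ + s (k + 1)),
            U θ • (NormedSpace.exp ((σ + s (k + 1) - θ) • A (k + 1))) (Bv (k + 1)))‖ ≤
      (ε * Real.exp (MAbar * (D - τ)) * (MBbar * (D - τ) + 1)) *
        ∫ θ in (σ + s k)..(σ + s (k + 1)), |U θ| := by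
    intro k hkmem
    rw [Finset.mem_range] at hkmem
    have hk : k ≤ r := by omega
    have hcomm := ContinuousLinearMap.intervalIntegral_comp_comm
      (dprod (fun j => NormedSpace.exp ((s (j + 1) - s j) • A (j + 1))) (k + 1) r)
      (hGint k hk)
    rw [← hcomm]
    simp only [_root_.map_smul]
    have hΦGcont : Continuous fun θ : ℝ =>
        (dprod (fun j => NormedSpace.exp ((s (j + 1) - s j) • A (j + 1))) (k + 1) r)
          ((NormedSpace.exp ((σ + s (k + 1) - θ) • A (k + 1))) (Bv (k + 1))) :=
      (ContinuousLinearMap.continuous _).comp (hcont (σ + s (k + 1)) (A (k + 1)) (Bv (k + 1)))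
    rw [← intervalIntegral.integral_sub (hJint k hk)
      (hint _ hΦGcont _ _ (hak k (by omega)).1 (haki k hk) (hak (k + 1) (by omega)).2)]
    simp only [← smul_sub]
    apply hbnd _ _ _ _ (hak k (by omega)).1 (haki k hk) (hak (k + 1) (by omega)).2 _
      ((hcont t Abar Bbar).sub hΦGcont)
    intro θ hθ
    obtain ⟨hθ1, hθ2⟩ := hθ
    obtain ⟨hker1, hker2⟩ := hker (k + 1) (by omega) (by omega) θ (by simpa using hθ1) hθ2
    have hsk0 : 0 ≤ s k := hs_nonneg k (by omega)
    have hsk1 : s (k + 1) ≤ D - τ := hs_le (k + 1) (by omega)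
    have hEbn : ‖NormedSpace.exp ((t - θ) • Abar)‖ ≤ Real.exp (MAbar * (D - τ)) := by
      refine le_trans (aux_exp_smul_norm hone (by linarith) hAbar) ?_
      apply Real.exp_le_exp.mpr
      nlinarith
    set Eb := NormedSpace.exp ((t - θ) • Abar) with hEbdef
    set Gop := dprod (fun j => NormedSpace.exp ((s (j + 1) - s j) • A (j + 1))) (k + 1) r *
      NormedSpace.exp ((σ + s (k + 1) - θ) • A (k + 1)) with hGopdef
    have hGapply :
        (dprod (fun j => NormedSpace.exp ((s (j + 1) - s j) • A (j + 1))) (k + 1) r)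
          ((NormedSpace.exp ((σ + s (k + 1) - θ) • A (k + 1))) (Bv (k + 1)))
        = Gop (Bv (k + 1)) := by
      rw [hGopdef, ContinuousLinearMap.mul_apply]
    simp only [Pi.sub_apply]
    rw [hGapply]
    calc ‖Eb Bbar - Gop (Bv (k + 1))‖
        = ‖Eb (Bbar - Bv (k + 1)) + (Eb - Gop) (Bv (k + 1))‖ := by
          rw [map_sub, ContinuousLinearMap.sub_apply]
          congr 1
          abel
      _ ≤ ‖Eb (Bbar - Bv (k + 1))‖ + ‖(Eb - Gop) (Bv (k + 1))‖ := norm_add_le _ _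
      _ ≤ Real.exp (MAbar * (D - τ)) * ε +
          (ε * (D - τ) * Real.exp (MAbar * (D - τ))) * MBbar := by
          apply add_le_add
          · refine le_trans (ContinuousLinearMap.le_opNorm _ _) ?_
            apply mul_le_mul hEbn _ (norm_nonneg _) (Real.exp_nonneg _)
            rw [norm_sub_rev]
            exact hBd (k + 1) (by omega) (by omega)
          · refine le_trans (ContinuousLinearMap.le_opNorm _ _) ?_
            apply mul_le_mul _ (hB (k + 1) (by omega) (by omega)) (norm_nonneg _) (by positivity)
            rw [norm_sub_rev]
            exact hker1
      _ = ε * Real.exp (MAbar * (D - τ)) * (MBbar * (D - τ) + 1) := by ring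
  -- bound on Ibar - S
  have hIS : ‖Ibar - S‖ ≤ (ε * Real.exp (MAbar * (D - τ)) * (MBbar * (D - τ) + 1)) * I₂ := by
    rw [hIbarsplit, hreidx, ← Finset.sum_sub_distrib]
    refine le_trans (norm_sum_le _ _) ?_
    refine le_trans (Finset.sum_le_sum hterm) ?_
    rw [← Finset.mul_sum, ← habssplit]
  -- bound on Zb - P
  have hZbP : ‖Zb - P‖ ≤ ε * (D - τ) * Real.exp (MAbar * (D - τ)) * ‖Xp‖ +
      (ε * Real.exp (MAbar * (D - τ)) * (MBbar * (D - τ) + 1)) * I₂ := by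
    have hZP : Zb - P = ((NormedSpace.exp ((D - τ) • Abar)) Xp - Φap Xp) + (Ibar - S) := by
      rw [hZbdef, hP]; abel
    rw [hZP]
    refine le_trans (norm_add_le _ _) (add_le_add ?_ hIS)
    rw [show (NormedSpace.exp ((D - τ) • Abar)) Xp - Φap Xp
        = (NormedSpace.exp ((D - τ) • Abar) - Φap) Xp from by
      rw [ContinuousLinearMap.sub_apply]]
    refine le_trans (ContinuousLinearMap.le_opNorm _ _) ?_
    apply mul_le_mul_of_nonneg_right _ (norm_nonneg _)
    rw [norm_sub_rev]
    exact hΦsub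
  -- main decomposition
  have hstep1 : |U₁ - K P| ≤ ε * ‖Zb‖ + MK * ‖Zb - P‖ := by
    have hdiff : U₁ - K P = (Kbar - K) Zb + K (Zb - P) := by
      rw [hU₁, hP]
      simp only [ContinuousLinearMap.sub_apply, map_sub, hZbdef, hP]
      ring
    rw [hdiff]
    refine le_trans (abs_add_le _ _) (add_le_add ?_ ?_)
    · calc |(Kbar - K) Zb| = ‖(Kbar - K) Zb‖ := (Real.norm_eq_abs _).symm
        _ ≤ ‖Kbar - K‖ * ‖Zb‖ := ContinuousLinearMap.le_opNorm _ _
        _ ≤ ε * ‖Zb‖ := by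
            apply mul_le_mul_of_nonneg_right _ (norm_nonneg _)
            rw [norm_sub_rev]; exact hKd
    · calc |K (Zb - P)| = ‖K (Zb - P)‖ := (Real.norm_eq_abs _).symm
        _ ≤ ‖K‖ * ‖Zb - P‖ := ContinuousLinearMap.le_opNorm _ _
        _ ≤ MK * ‖Zb - P‖ := mul_le_mul_of_nonneg_right hK (norm_nonneg _)
  -- final arithmetic
  set e1 := Real.exp (MAbar * τ) with he1def
  set e2 := Real.exp (MAbar * (D - τ)) with he2def
  set EE := Real.exp ((MAbar + ε) * D) with hEEdef
  set mx := max 1 MBbar with hmxdef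
  set dta := max (mx * (MK * (D - τ) + 1)) (2 * MK * MBbar * (D - τ) + ε + MK + MBbar)
    with hdtadef
  have hmx1 : (1 : ℝ) ≤ mx := le_max_left _ _
  have hmx2 : MBbar ≤ mx := le_max_right _ _
  have hmx0 : (0 : ℝ) ≤ mx := by linarith
  have hW0 : 0 ≤ ‖Xt‖ + I₁ := by positivity
  have hEE1 : e1 * e2 ≤ EE := by
    rw [he1def, he2def, hEEdef, ← Real.exp_add]
    apply Real.exp_le_exp.mpr
    nlinarith
  have hEE2 : e2 ≤ EE := by
    rw [he2def, hEEdef]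
    apply Real.exp_le_exp.mpr
    nlinarith
  have hδ1nn : 0 ≤ mx * (MK * (D - τ) + 1) := by
    apply mul_nonneg hmx0
    nlinarith
  have hδ1le : mx * (MK * (D - τ) + 1) ≤ dta := le_max_left _ _
  have hδ2le : MBbar + MK * (MBbar * (D - τ) + 1) ≤ dta := by
    refine le_trans ?_ (le_max_right _ _)
    nlinarith [mul_nonneg (mul_nonneg hMK0 hMB0) hL0]
  have hδnn : 0 ≤ dta := le_trans hδ1nn hδ1le
  have he20 : 0 < e2 := Real.exp_pos _
  have he10 : 0 < e1 := Real.exp_pos _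
  have hEE0 : 0 < EE := Real.exp_pos _
  rw [hItot]
  calc |U₁ - K P| ≤ ε * ‖Zb‖ + MK * ‖Zb - P‖ := hstep1
    _ ≤ ε * (e2 * ‖Xp‖ + e2 * MBbar * I₂) +
        MK * (ε * (D - τ) * e2 * ‖Xp‖ + (ε * e2 * (MBbar * (D - τ) + 1)) * I₂) := by
        apply add_le_add (mul_le_mul_of_nonneg_left hZbn hε0)
        apply mul_le_mul_of_nonneg_left _ hMK0
        refine le_trans hZbP (le_of_eq ?_)
        ring
    _ = ε * e2 * (1 + MK * (D - τ)) * ‖Xp‖ +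
        ε * e2 * (MBbar + MK * (MBbar * (D - τ) + 1)) * I₂ := by ring
    _ ≤ ε * e2 * (1 + MK * (D - τ)) * (e1 * mx * (‖Xt‖ + I₁)) +
        ε * e2 * (MBbar + MK * (MBbar * (D - τ) + 1)) * I₂ := by
        apply add_le_add _ le_rfl
        apply mul_le_mul_of_nonneg_left hXpn
        have : 0 ≤ 1 + MK * (D - τ) := by nlinarith
        positivity
    _ = ε * (e1 * e2) * (mx * (MK * (D - τ) + 1)) * (‖Xt‖ + I₁) +
        ε * e2 * (MBbar + MK * (MBbar * (D - τ) + 1)) * I₂ := by ring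
    _ ≤ ε * EE * dta * (‖Xt‖ + I₁) + ε * EE * dta * I₂ := by
        apply add_le_add
        · calc ε * (e1 * e2) * (mx * (MK * (D - τ) + 1)) * (‖Xt‖ + I₁)
              ≤ ε * EE * (mx * (MK * (D - τ) + 1)) * (‖Xt‖ + I₁) := by
                apply mul_le_mul_of_nonneg_right _ hW0
                apply mul_le_mul_of_nonneg_right _ hδ1nn
                exact mul_le_mul_of_nonneg_left hEE1 hε0
            _ ≤ ε * EE * dta * (‖Xt‖ + I₁) := by
                apply mul_le_mul_of_nonneg_right _ hW0
                exact mul_le_mul_of_nonneg_left hδ1le (by positivity)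
        · calc ε * e2 * (MBbar + MK * (MBbar * (D - τ) + 1)) * I₂
              ≤ ε * EE * (MBbar + MK * (MBbar * (D - τ) + 1)) * I₂ := by
                apply mul_le_mul_of_nonneg_right _ hI₂0
                apply mul_le_mul_of_nonneg_right _ (by nlinarith)
                exact mul_le_mul_of_nonneg_left hEE2 hε0
            _ ≤ ε * EE * dta * I₂ := by
                apply mul_le_mul_of_nonneg_right _ hI₂0
                exact mul_le_mul_of_nonneg_left hδ2le (by positivity)
    _ = ε * EE * dta * (‖Xt‖ + (I₁ + I₂)) := by ring
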